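/- arXiv:math/0606185 — 2 statements merged into one kernel-verified Lean document; each statement's English description precedes it below -/
import Mathlib

section
/- For all z > 0 and ν > 0, the modified Bessel function of the first kind satisfies I_ν(z) ≤ c z^{-1/2} e^z for some constant c > 0 independent of ν and z. -/
/-!
After the substitution `s = 1 + u`, the integral `∫_{-1}^1 (1+u)^a e^{-zu} du` is at most
`e^z ∫_0^∞ s^a e^{-zs} ds = e^z Γ(a+1) z^{-(a+1)}`. The integrand `(1-u²)^a e^{-zu}` is bounded
pointwise by `2^{max(a,0)}` times that integrand plus its reflection under `u ↦ -u`, so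
`∫_{-1}^1 (1-u²)^a e^{-zu} du ≤ 2^{max(a,0)+1} e^z Γ(a+1) z^{-(a+1)}`. For `a = ν - 1/2` the Gamma
factors cancel, the powers of `z` combine to `z^{-1/2}`, and `2^{max(ν-1/2,0)+1-ν}/√π ≤ 2`.
-/

open Real MeasureTheory

/-- Modified Bessel function of the first kind, via its integral representation
`I_ν(z) = (z/2)^ν / (Γ(ν+1/2)√π) ∫_{-1}^1 (1-u²)^{ν-1/2} e^{-zu} du`. -/
noncomputable def besselI (ν z : ℝ) : ℝ :=
  (z / 2) ^ ν / (Real.Gamma (ν + 1 / 2) * Real.sqrt π) *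
    ∫ u in (-1 : ℝ)..1, (1 - u ^ 2) ^ (ν - 1 / 2) * Real.exp (-z * u)

open Set

lemma rpow_le_two_rpow_max_zero {x : ℝ} (a : ℝ) (h₁ : 1 ≤ x) (h₂ : x ≤ 2) :
    x ^ a ≤ 2 ^ max a 0 :=
  calc x ^ a ≤ x ^ max a 0 := rpow_le_rpow_of_exponent_le h₁ (le_max_left a 0)
    _ ≤ 2 ^ max a 0 := rpow_le_rpow (by linarith) h₂ (le_max_right a 0)

lemma one_sub_sq_rpow_mul_exp_neg_mul_le {z : ℝ} (a : ℝ) (hz : 0 ≤ z) {u : ℝ}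
    (hu : u ∈ Icc (-1 : ℝ) 1) :
    (1 - u ^ 2) ^ a * exp (-z * u) ≤
      2 ^ max a 0 * ((1 + u) ^ a * exp (-z * u) + (1 - u) ^ a * exp (z * u)) := by
  obtain ⟨hu₁, hu₂⟩ := hu
  have hfactor : (1 - u ^ 2) ^ a = (1 + u) ^ a * (1 - u) ^ a := by
    rw [← mul_rpow (by linarith) (by linarith)]; ring_nf
  have hg : 0 ≤ (1 + u) ^ a * exp (-z * u) := by
    have := rpow_nonneg (show (0 : ℝ) ≤ 1 + u by linarith) a; positivity
  have hh : 0 ≤ (1 - u) ^ a * exp (z * u) := by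
    have := rpow_nonneg (show (0 : ℝ) ≤ 1 - u by linarith) a; positivity
  rcases le_total u 0 with hu | hu
  · calc (1 - u ^ 2) ^ a * exp (-z * u) = (1 - u) ^ a * ((1 + u) ^ a * exp (-z * u)) := by
          rw [hfactor]; ring
      _ ≤ 2 ^ max a 0 * ((1 + u) ^ a * exp (-z * u)) :=
          mul_le_mul_of_nonneg_right (rpow_le_two_rpow_max_zero a (by linarith) (by linarith)) hg
      _ ≤ _ := by gcongr; linarith
  · calc (1 - u ^ 2) ^ a * exp (-z * u) ≤ (1 - u ^ 2) ^ a * exp (z * u) := by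
          have := rpow_nonneg (show (0 : ℝ) ≤ 1 - u ^ 2 by nlinarith) a
          gcongr; nlinarith
      _ = (1 + u) ^ a * ((1 - u) ^ a * exp (z * u)) := by rw [hfactor]; ring
      _ ≤ 2 ^ max a 0 * ((1 - u) ^ a * exp (z * u)) :=
          mul_le_mul_of_nonneg_right (rpow_le_two_rpow_max_zero a (by linarith) (by linarith)) hh
      _ ≤ _ := by gcongr; linarith

lemma intervalIntegrable_one_add_rpow_mul_exp_neg_mul {a : ℝ} (ha : -1 < a) (z : ℝ) :
    IntervalIntegrable (fun u => (1 + u) ^ a * exp (-z * u)) volume (-1) 1 := by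
  have := (intervalIntegral.intervalIntegrable_rpow' (a := 0) (b := 2) ha).comp_add_left 1
  norm_num at this
  exact this.mul_continuousOn (by fun_prop)

lemma integral_rpow_mul_exp_neg_mul_le {a z b : ℝ} (ha : -1 < a) (hz : 0 < z) (hb : 0 ≤ b) :
    ∫ s in 0..b, s ^ a * exp (-z * s) ≤ (1 / z) ^ (a + 1) * Gamma (a + 1) := by
  have hint : IntegrableOn (fun s : ℝ => s ^ a * exp (-z * s)) (Ioi 0) := by
    simpa using integrableOn_rpow_mul_exp_neg_mul_rpow ha one_pos hz
  have hval := integral_rpow_mul_exp_neg_mul_Ioi (show 0 < a + 1 by linarith) hz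
  simp only [add_sub_cancel_right, ← neg_mul] at hval
  rw [← hval, intervalIntegral.integral_of_le hb]
  refine setIntegral_mono_set hint ?_ Ioc_subset_Ioi_self.eventuallyLE
  filter_upwards [self_mem_ae_restrict measurableSet_Ioi] with s hs
  have := rpow_nonneg (le_of_lt hs) a
  positivity

lemma integral_one_add_rpow_mul_exp_neg_mul_le {a z : ℝ} (ha : -1 < a) (hz : 0 < z) :
    ∫ u in (-1 : ℝ)..1, (1 + u) ^ a * exp (-z * u) ≤
      exp z * ((1 / z) ^ (a + 1) * Gamma (a + 1)) := by
  have hshift : ∫ u in (-1 : ℝ)..1, (1 + u) ^ a * exp (-z * u) =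
      exp z * ∫ s in (0 : ℝ)..2, s ^ a * exp (-z * s) :=
    calc ∫ u in (-1 : ℝ)..1, (1 + u) ^ a * exp (-z * u)
        = ∫ u in (-1 : ℝ)..1, exp z * ((1 + u) ^ a * exp (-z * (1 + u))) :=
          intervalIntegral.integral_congr fun u _ => by
            rw [mul_left_comm, ← exp_add]; ring_nf
      _ = exp z * ∫ s in (0 : ℝ)..2, s ^ a * exp (-z * s) := by
          rw [intervalIntegral.integral_const_mul,
            intervalIntegral.integral_comp_add_left (fun s => s ^ a * exp (-z * s))]
          norm_num
  rw [hshift]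
  gcongr
  exact integral_rpow_mul_exp_neg_mul_le ha hz zero_le_two

lemma integral_one_sub_rpow_mul_exp_mul (a z : ℝ) :
    ∫ u in (-1 : ℝ)..1, (1 - u) ^ a * exp (z * u) =
      ∫ u in (-1 : ℝ)..1, (1 + u) ^ a * exp (-z * u) := by
  simpa [sub_eq_add_neg] using
    intervalIntegral.integral_comp_neg (a := -1) (b := 1) fun u => (1 + u) ^ a * exp (-z * u)

lemma integral_one_sub_sq_rpow_mul_exp_neg_mul_le {a z : ℝ} (ha : -1 < a) (hz : 0 < z) :
    ∫ u in (-1 : ℝ)..1, (1 - u ^ 2) ^ a * exp (-z * u) ≤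
      2 ^ (max a 0 + 1) * exp z * ((1 / z) ^ (a + 1) * Gamma (a + 1)) := by
  have hg := intervalIntegrable_one_add_rpow_mul_exp_neg_mul ha z
  have hh : IntervalIntegrable (fun u => (1 - u) ^ a * exp (z * u)) volume (-1) 1 := by
    simpa [sub_eq_add_neg] using (hg.comp_sub_left 0).symm
  calc ∫ u in (-1 : ℝ)..1, (1 - u ^ 2) ^ a * exp (-z * u)
      ≤ ∫ u in (-1 : ℝ)..1,
          2 ^ max a 0 * ((1 + u) ^ a * exp (-z * u) + (1 - u) ^ a * exp (z * u)) := by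
        rw [intervalIntegral.integral_of_le (by norm_num),
          intervalIntegral.integral_of_le (by norm_num)]
        refine setIntegral_mono_of_nonneg (fun u hu => ?_)
          (fun u hu => one_sub_sq_rpow_mul_exp_neg_mul_le a hz.le (Ioc_subset_Icc_self hu))
          ((hg.add hh).const_mul _).1
        have := rpow_nonneg (show (0 : ℝ) ≤ 1 - u ^ 2 by nlinarith [hu.1, hu.2]) a
        positivity
    _ = 2 ^ max a 0 * (2 * ∫ u in (-1 : ℝ)..1, (1 + u) ^ a * exp (-z * u)) := by
        rw [intervalIntegral.integral_const_mul, intervalIntegral.integral_add hg hh,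
          integral_one_sub_rpow_mul_exp_mul]
        ring
    _ ≤ 2 ^ max a 0 * (2 * (exp z * ((1 / z) ^ (a + 1) * Gamma (a + 1)))) := by
        gcongr
        exact integral_one_add_rpow_mul_exp_neg_mul_le ha hz
    _ = 2 ^ (max a 0 + 1) * exp z * ((1 / z) ^ (a + 1) * Gamma (a + 1)) := by
        rw [rpow_add_one two_ne_zero]; ring

theorem besselI_upper_bound :
    ∃ c : ℝ, 0 < c ∧ ∀ ν z : ℝ, 0 < ν → 0 < z →
      besselI ν z ≤ c * z ^ (-(1 : ℝ) / 2) * Real.exp z := by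
  refine ⟨2, two_pos, fun ν z hν hz => ?_⟩
  have hπ : 1 ≤ √π := one_le_sqrt.mpr (by linarith [pi_gt_three])
  have hexp : max (ν - 1 / 2) 0 + 1 - ν ≤ 1 := by
    have := max_le (show ν - 1 / 2 ≤ ν by linarith) hν.le; linarith
  have hJ := integral_one_sub_sq_rpow_mul_exp_neg_mul_le (a := ν - 1 / 2) (by linarith) hz
  rw [show ν - 1 / 2 + 1 = ν + 1 / 2 by ring] at hJ
  calc besselI ν z
      ≤ (z / 2) ^ ν / (Gamma (ν + 1 / 2) * √π) * (2 ^ (max (ν - 1 / 2) 0 + 1) * exp z *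
          ((1 / z) ^ (ν + 1 / 2) * Gamma (ν + 1 / 2))) :=
        mul_le_mul_of_nonneg_left hJ (by positivity)
    _ = 2 ^ (max (ν - 1 / 2) 0 + 1 - ν) / √π * z ^ (-(1 : ℝ) / 2) * exp z := by
        have hz' : z ^ (-(1 : ℝ) / 2) = z ^ ν * (1 / z) ^ (ν + 1 / 2) := by
          rw [one_div, inv_rpow hz.le, ← rpow_neg hz.le, ← rpow_add hz]; ring_nf
        rw [div_rpow hz.le zero_le_two, rpow_sub two_pos, hz']
        field_simp
    _ ≤ 2 * z ^ (-(1 : ℝ) / 2) * exp z := by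
        gcongr
        calc 2 ^ (max (ν - 1 / 2) 0 + 1 - ν) / √π ≤ 2 ^ (max (ν - 1 / 2) 0 + 1 - ν) :=
              div_le_self (by positivity) hπ
          _ ≤ 2 := by simpa using rpow_le_rpow_of_exponent_le one_le_two hexp
end

section
/- Fix q ≥ 2 an integer and set γ = 2√q/(q+1). The function p(u) = √(1+γ²u²) − u + log u − log(1 + √(1+γ²u²)) on (0,∞) attains its global maximum at u₀ = (q+1)/(q−1), and p(u₀) = −log(γ√q) = −log(2q/(q+1)). -/
/-!
The derivative of `p` is `(√(1 + γ²u²) - u) / u`, which is positive exactly when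
`(1 - γ²) u² < 1`. So `p` increases up to the critical point `u₀ = (1 - γ²)^(-1/2)` and decreases
after it. At `u₀` the square root equals `u₀`, so `p u₀ = -log ((1 + u₀) / u₀)`; for
`γ = 2√q/(q+1)` one has `1 - γ² = ((q-1)/(q+1))²` and `(1 + u₀) / u₀ = 2q/(q+1) = γ√q`.
-/

open Real Set

noncomputable def besselPhase (γ u : ℝ) : ℝ :=
  √(1 + γ ^ 2 * u ^ 2) - u + log u - log (1 + √(1 + γ ^ 2 * u ^ 2))

theorem isMaxOn_Ioi_of_hasDerivAt {f f' : ℝ → ℝ} {a c : ℝ} (hac : a < c)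
    (hf : ∀ x ∈ Ioi a, HasDerivAt f (f' x) x)
    (hf'_nonneg : ∀ x ∈ Ioo a c, 0 ≤ f' x) (hf'_nonpos : ∀ x ∈ Ioi c, f' x ≤ 0) :
    IsMaxOn f (Ioi a) c := by
  have hcont : ContinuousOn f (Ioi a) := fun x hx => (hf x hx).continuousAt.continuousWithinAt
  have hmono : MonotoneOn f (Ioc a c) := by
    refine monotoneOn_of_hasDerivWithinAt_nonneg (f' := f') (convex_Ioc a c)
      (hcont.mono Ioc_subset_Ioi_self) (fun x hx => ?_) (fun x hx => ?_)
    · rw [interior_Ioc] at hx ⊢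
      exact (hf x hx.1).hasDerivWithinAt
    · rw [interior_Ioc] at hx
      exact hf'_nonneg x hx
  have hanti : AntitoneOn f (Ici c) := by
    refine antitoneOn_of_hasDerivWithinAt_nonpos (f' := f') (convex_Ici c)
      (hcont.mono (Ici_subset_Ioi.mpr hac)) (fun x hx => ?_) (fun x hx => ?_)
    · rw [interior_Ici] at hx ⊢
      exact (hf x (hac.trans hx)).hasDerivWithinAt
    · rw [interior_Ici] at hx
      exact hf'_nonpos x hx
  intro x (hx : a < x)
  rcases le_total x c with hxc | hcx
  · exact hmono ⟨hx, hxc⟩ ⟨hac, le_rfl⟩ hxc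
  · exact hanti self_mem_Ici hcx hcx

theorem hasDerivAt_besselPhase (γ : ℝ) {u : ℝ} (hu : 0 < u) :
    HasDerivAt (besselPhase γ) ((√(1 + γ ^ 2 * u ^ 2) - u) / u) u := by
  have hA : 0 < 1 + γ ^ 2 * u ^ 2 := by positivity
  have hs_sq : √(1 + γ ^ 2 * u ^ 2) ^ 2 = 1 + γ ^ 2 * u ^ 2 := sq_sqrt hA.le
  have hsqrt : HasDerivAt (fun u => √(1 + γ ^ 2 * u ^ 2))
      (γ ^ 2 * (2 * u) / (2 * √(1 + γ ^ 2 * u ^ 2))) u := by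
    simpa using (((hasDerivAt_pow 2 u).const_mul (γ ^ 2)).const_add 1).sqrt hA.ne'
  have hlog := (hsqrt.const_add 1).log (by positivity)
  refine (((hsqrt.sub (hasDerivAt_id u)).add (hasDerivAt_log hu.ne')).sub hlog).congr_deriv ?_
  field_simp
  linear_combination (-√(1 + γ ^ 2 * u ^ 2)) * hs_sq

theorem lt_sqrt_one_add_sq_mul_sq_iff {γ u u₀ : ℝ} (hu : 0 ≤ u) (hu₀ : 0 ≤ u₀)
    (hcrit : (1 - γ ^ 2) * u₀ ^ 2 = 1) : u < √(1 + γ ^ 2 * u ^ 2) ↔ u < u₀ := by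
  have hγ : 0 < 1 - γ ^ 2 := by nlinarith [sq_nonneg u₀]
  calc u < √(1 + γ ^ 2 * u ^ 2) ↔ (1 - γ ^ 2) * u ^ 2 < (1 - γ ^ 2) * u₀ ^ 2 := by
        rw [lt_sqrt hu, hcrit]
        constructor <;> intro h <;> linarith
    _ ↔ u ^ 2 < u₀ ^ 2 := mul_lt_mul_iff_right₀ hγ
    _ ↔ u < u₀ := pow_lt_pow_iff_left₀ hu hu₀ two_ne_zero

theorem isMaxOn_besselPhase {γ u₀ : ℝ} (hu₀ : 0 < u₀) (hcrit : (1 - γ ^ 2) * u₀ ^ 2 = 1) :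
    IsMaxOn (besselPhase γ) (Ioi 0) u₀ := by
  refine isMaxOn_Ioi_of_hasDerivAt hu₀ (fun x hx => hasDerivAt_besselPhase γ hx)
    (fun x hx => div_nonneg ?_ hx.1.le) (fun x hx => div_nonpos_of_nonpos_of_nonneg ?_ ?_)
  · exact sub_nonneg.mpr ((lt_sqrt_one_add_sq_mul_sq_iff hx.1.le hu₀.le hcrit).mpr hx.2).le
  · exact sub_nonpos.mpr <| not_lt.mp fun h =>
      hx.not_gt ((lt_sqrt_one_add_sq_mul_sq_iff (hu₀.trans hx).le hu₀.le hcrit).mp h)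
  · exact (hu₀.trans hx).le

theorem besselPhase_eq_neg_log_of_critical {γ u₀ : ℝ} (hu₀ : 0 < u₀)
    (hcrit : (1 - γ ^ 2) * u₀ ^ 2 = 1) : besselPhase γ u₀ = -log ((1 + u₀) / u₀) := by
  have hsqrt : √(1 + γ ^ 2 * u₀ ^ 2) = u₀ := by
    rw [show 1 + γ ^ 2 * u₀ ^ 2 = u₀ ^ 2 by linarith, sqrt_sq hu₀.le]
  rw [besselPhase, hsqrt, log_div (by positivity) hu₀.ne']
  ring

theorem max_of_bessel_phase (q : ℕ) (hq : 2 ≤ q) :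
    let γ : ℝ := 2 * Real.sqrt (q : ℝ) / ((q : ℝ) + 1)
    let p : ℝ → ℝ := fun u =>
      Real.sqrt (1 + γ ^ 2 * u ^ 2) - u + Real.log u -
        Real.log (1 + Real.sqrt (1 + γ ^ 2 * u ^ 2))
    let u₀ : ℝ := ((q : ℝ) + 1) / ((q : ℝ) - 1)
    (∀ u : ℝ, 0 < u → p u ≤ p u₀) ∧
      p u₀ = -Real.log (γ * Real.sqrt (q : ℝ)) ∧
      p u₀ = -Real.log (2 * (q : ℝ) / ((q : ℝ) + 1)) := by
  intro γ p u₀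
  have hq' : (2 : ℝ) ≤ q := by exact_mod_cast hq
  have hq_sub : (q : ℝ) - 1 ≠ 0 := by linarith
  have hu₀ : 0 < u₀ := div_pos (by linarith) (by linarith)
  have hγ_sq : γ ^ 2 = 4 * q / (q + 1) ^ 2 := by
    rw [div_pow, mul_pow, sq_sqrt (by positivity)]
    ring
  have hcrit : (1 - γ ^ 2) * u₀ ^ 2 = 1 := by
    rw [hγ_sq]
    simp only [u₀]
    field_simp
    ring
  have hratio : (1 + u₀) / u₀ = 2 * q / (q + 1) := by
    simp only [u₀]
    field_simp
    ring
  have hγ_mul : γ * √q = 2 * q / (q + 1) := by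
    rw [div_mul_eq_mul_div, mul_assoc, mul_self_sqrt (by positivity)]
  have hval : p u₀ = -log (2 * q / (q + 1)) :=
    hratio ▸ besselPhase_eq_neg_log_of_critical hu₀ hcrit
  exact ⟨isMaxOn_iff.mp (isMaxOn_besselPhase hu₀ hcrit), hγ_mul ▸ hval, hval⟩
end
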